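/- arXiv:2112.13233 — 2 statements merged into one kernel-verified Lean document; each statement's English description precedes it below -/
import Mathlib

section
/- Let (X,f) be a topological dynamical system and A a minimal quasi-section. Then the closures of O(A), O⁺(A), and O⁻(A) are all equal to M_f. -/
open Set

/-- The full orbit `{fⁿ(x) : n ∈ ℤ}` of a point under a homeomorphism. -/
def orbitZ {X : Type*} [TopologicalSpace X] (f : X ≃ₜ X) (x : X) : Set X :=
  {y | ∃ n : ℤ, (f.toEquiv ^ n) x = y}

/-- `O(A) = ⋃_{n ∈ ℤ} fⁿ(A)`. -/
def orbitSetZ {X : Type*} [TopologicalSpace X] (f : X ≃ₜ X) (A : Set X) : Set X :=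
  ⋃ n : ℤ, (f.toEquiv ^ n) '' A

/-- `O⁺(A) = ⋃_{n ≥ 0} fⁿ(A)`. -/
def orbitSetP {X : Type*} [TopologicalSpace X] (f : X ≃ₜ X) (A : Set X) : Set X :=
  ⋃ n : ℕ, (f.toEquiv ^ (n : ℤ)) '' A

/-- `O⁻(A) = ⋃_{n ≤ 0} fⁿ(A)`. -/
def orbitSetN {X : Type*} [TopologicalSpace X] (f : X ≃ₜ X) (A : Set X) : Set X :=
  ⋃ n : ℕ, (f.toEquiv ^ (-(n : ℤ))) '' A

/-- The ω-limit set of a point. -/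
def omegaSet {X : Type*} [TopologicalSpace X] (f : X ≃ₜ X) (x : X) : Set X :=
  ⋂ n : ℕ, closure {y | ∃ m : ℕ, n ≤ m ∧ (f.toEquiv ^ (m : ℤ)) x = y}

/-- The α-limit set of a point. -/
def alphaSet {X : Type*} [TopologicalSpace X] (f : X ≃ₜ X) (x : X) : Set X :=
  ⋂ n : ℕ, closure {y | ∃ m : ℕ, n ≤ m ∧ (f.toEquiv ^ (-(m : ℤ))) x = y}

/-- A minimal set: nonempty, closed, invariant, and every orbit in it is dense in it. -/
def IsMinimalSet {X : Type*} [TopologicalSpace X] (f : X ≃ₜ X) (M : Set X) : Prop :=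
  M.Nonempty ∧ IsClosed M ∧ f '' M = M ∧ ∀ x ∈ M, M ⊆ closure (orbitZ f x)

/-- `M_f`: the closure of the union of all minimal sets. -/
def minimalUnion {X : Type*} [TopologicalSpace X] (f : X ≃ₜ X) : Set X :=
  closure (⋃₀ {M | IsMinimalSet f M})

/-- A wandering point. -/
def IsWandering {X : Type*} [TopologicalSpace X] (f : X ≃ₜ X) (x : X) : Prop :=
  ∃ U : Set X, IsOpen U ∧ x ∈ U ∧ ∀ n : ℤ, n ≠ 0 → (f.toEquiv ^ n) '' U ∩ U = ∅

/-- `Ω_f`: the set of non-wandering points. -/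
def nonWandering {X : Type*} [TopologicalSpace X] (f : X ≃ₜ X) : Set X :=
  {x | ¬ IsWandering f x}

/-- A quasi-section: a closed set every open neighborhood of which has full orbit. -/
def IsQuasiSection {X : Type*} [TopologicalSpace X] (f : X ≃ₜ X) (A : Set X) : Prop :=
  IsClosed A ∧ ∀ U : Set X, IsOpen U → A ⊆ U → orbitSetZ f U = Set.univ

/-- A minimal quasi-section (minimal w.r.t. inclusion among quasi-sections). -/
def IsMinimalQuasiSection {X : Type*} [TopologicalSpace X] (f : X ≃ₜ X) (A : Set X) : Prop :=
  IsQuasiSection f A ∧ ∀ B : Set X, IsQuasiSection f B → B ⊆ A → B = A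

/-- A basic set: a quasi-section meeting every orbit in at most one point. -/
def IsBasicSet {X : Type*} [TopologicalSpace X] (f : X ≃ₜ X) (A : Set X) : Prop :=
  IsQuasiSection f A ∧ ∀ x : X, (orbitZ f x ∩ A).Subsingleton

/-- A minimal basic set (minimal w.r.t. inclusion among basic sets). -/
def IsMinimalBasicSet {X : Type*} [TopologicalSpace X] (f : X ≃ₜ X) (A : Set X) : Prop :=
  IsBasicSet f A ∧ ∀ B : Set X, IsBasicSet f B → B ⊆ A → B = A

/-- Densely aperiodic: the points with infinite orbit are dense. -/
def DenselyAperiodic {X : Type*} [TopologicalSpace X] (f : X ≃ₜ X) : Prop :=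
  Dense {x : X | (orbitZ f x).Infinite}

/-!
Every minimal set `M` meets a quasi-section `A`: otherwise the invariant open set `Mᶜ` would be a
neighbourhood of `A` with `O(Mᶜ) = Mᶜ ≠ X`. By Zorn's lemma every nonempty closed forward-invariant
set contains a minimal set. Applied to `closure O⁺(A ∩ M) ⊆ M`, this gives a point whose orbit is
dense in `M` and stays in `closure O⁺(A ∩ M)`, so `M ⊆ closure O⁺(A)`; replacing `f` by `f⁻¹`
gives `M ⊆ closure O⁻(A)`. Conversely `A ∩ M_f` is again a quasi-section, since the closure of
every orbit contains a minimal set and hence meets `A ∩ M_f`; minimality of `A` gives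
`A ⊆ M_f`, and so `closure O(A) ⊆ M_f`.
-/
open scoped Pointwise

theorem Equiv.Perm.zpow_image_eq {α : Type*} {g : Equiv.Perm α} {S : Set α} (h : g '' S = S)
    (n : ℤ) : (g ^ n) '' S = S := by
  -- `g • S` unfolds to `g '' S`
  have hg : g ∈ MulAction.stabilizer (Equiv.Perm α) S := h
  exact (MulAction.stabilizer (Equiv.Perm α) S).zpow_mem hg n

section Dynamics

variable {X : Type*} [TopologicalSpace X] (f : X ≃ₜ X)

theorem zpow_toEquiv_apply_succ (n : ℤ) (x : X) :
    f ((f.toEquiv ^ n) x) = (f.toEquiv ^ (1 + n)) x := by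
  rw [zpow_one_add]
  rfl

theorem self_mem_orbitZ (x : X) : x ∈ orbitZ f x :=
  ⟨0, by simp⟩

theorem mapsTo_orbitZ (x : X) : MapsTo f (orbitZ f x) (orbitZ f x) := by
  rintro _ ⟨n, rfl⟩
  exact ⟨1 + n, (zpow_toEquiv_apply_succ f n x).symm⟩

theorem mapsTo_orbitSetP (A : Set X) : MapsTo f (orbitSetP f A) (orbitSetP f A) := by
  rintro _ ⟨_, ⟨n, rfl⟩, a, ha, rfl⟩
  refine mem_iUnion.2 ⟨n + 1, a, ha, ?_⟩
  rw [zpow_toEquiv_apply_succ, Nat.cast_succ, add_comm]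

theorem orbitSetP_subset_orbitSetZ (A : Set X) : orbitSetP f A ⊆ orbitSetZ f A :=
  iUnion_subset fun n => subset_iUnion (fun k : ℤ => (f.toEquiv ^ k) '' A) n

theorem orbitSetN_subset_orbitSetZ (A : Set X) : orbitSetN f A ⊆ orbitSetZ f A :=
  iUnion_subset fun n => subset_iUnion (fun k : ℤ => (f.toEquiv ^ k) '' A) (-n)

variable {f}

theorem orbitZ_subset_of_image_eq {S : Set X} (hS : f '' S = S) {x : X} (hx : x ∈ S) :
    orbitZ f x ⊆ S := by
  rintro _ ⟨n, rfl⟩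
  rw [← Equiv.Perm.zpow_image_eq hS n]
  exact mem_image_of_mem _ hx

theorem orbitSetZ_subset_of_image_eq {S A : Set X} (hS : f '' S = S) (hA : A ⊆ S) :
    orbitSetZ f A ⊆ S :=
  iUnion_subset fun n => (image_mono hA).trans (Equiv.Perm.zpow_image_eq hS n).subset

theorem mem_orbitSetZ_of_zpow_mem {U : Set X} {y : X} {n : ℤ} (h : (f.toEquiv ^ n) y ∈ U) :
    y ∈ orbitSetZ f U :=
  mem_iUnion.2 ⟨-n, _, h, by rw [zpow_neg]; exact (f.toEquiv ^ n).symm_apply_apply y⟩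

theorem symm_toEquiv_zpow (n : ℤ) : f.symm.toEquiv ^ n = f.toEquiv ^ (-n) :=
  inv_zpow' f.toEquiv n

theorem orbitZ_symm (x : X) : orbitZ f.symm x = orbitZ f x := by
  ext y
  simp only [orbitZ, mem_ofPred_eq, symm_toEquiv_zpow]
  exact ⟨fun ⟨n, h⟩ => ⟨-n, h⟩, fun ⟨n, h⟩ => ⟨-n, by rwa [neg_neg]⟩⟩

theorem IsMinimalSet.symm {M : Set X} (hM : IsMinimalSet f M) : IsMinimalSet f.symm M := by
  obtain ⟨hne, hcl, hinv, hdense⟩ := hM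
  refine ⟨hne, hcl, ?_, fun x hx => orbitZ_symm (f := f) x ▸ hdense x hx⟩
  conv_lhs => rw [← hinv]
  exact f.toEquiv.symm_image_image M

theorem orbitSetP_symm (A : Set X) : orbitSetP f.symm A = orbitSetN f A := by
  simp only [orbitSetP, orbitSetN, symm_toEquiv_zpow]

theorem image_minimalUnion : f '' minimalUnion f = minimalUnion f := by
  rw [minimalUnion, f.image_closure, sUnion_eq_biUnion, image_iUnion₂]
  exact congrArg closure (iUnion₂_congr fun M (hM : IsMinimalSet f M) => hM.2.2.1)

variable [CompactSpace X]

theorem exists_isMinimalSet_subset {K : Set X} (hne : K.Nonempty) (hcl : IsClosed K)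
    (hf : MapsTo f K K) : ∃ M ⊆ K, IsMinimalSet f M := by
  set S : Set (Set X) := {C | C.Nonempty ∧ IsClosed C ∧ MapsTo f C C}
  have chain_bound : ∀ c ⊆ S, IsChain (· ⊆ ·) c → c.Nonempty → ∃ lb ∈ S, ∀ s ∈ c, lb ⊆ s := by
    intro c hcS hchain hcne
    have : Nonempty c := hcne.to_subtype
    have hdir : DirectedOn (· ⊇ ·) c :=
      IsChain.directedOn (r := fun s t : Set X => s ⊇ t) hchain.symm
    refine ⟨⋂₀ c, ⟨?_, isClosed_sInter fun C hC => (hcS hC).2.1, ?_⟩,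
      fun s hs => sInter_subset_of_mem hs⟩
    · exact IsCompact.nonempty_sInter_of_directed_nonempty_isCompact_isClosed
        hdir (fun C hC => (hcS hC).1) (fun C hC => (hcS hC).2.1.isCompact)
        (fun C hC => (hcS hC).2.1)
    · exact fun x hx => mem_sInter.2 fun C hC => (hcS hC).2.2 (mem_sInter.1 hx C hC)
  obtain ⟨M, hMK, hmin⟩ := zorn_superset_nonempty S chain_bound K ⟨hne, hcl, hf⟩
  obtain ⟨hMne, hMcl, hMf⟩ := hmin.prop
  -- `f '' M` is again a member of `S`, so minimality forces `f '' M = M`.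
  have hinv : f '' M = M := hMf.image_subset.antisymm <| hmin.2
    ⟨hMne.image f, f.isClosedMap M hMcl, fun _ hy => mem_image_of_mem f (hMf.image_subset hy)⟩
    hMf.image_subset
  refine ⟨M, hMK, hMne, hMcl, hinv, fun x hx => hmin.2 ?_ ?_⟩
  · exact ⟨⟨x, subset_closure (self_mem_orbitZ f x)⟩, isClosed_closure,
      (mapsTo_orbitZ f x).closure f.continuous⟩
  · exact closure_minimal (orbitZ_subset_of_image_eq hinv hx) hMcl

theorem IsMinimalSet.subset_closure_orbitSetP {M A : Set X} (hM : IsMinimalSet f M)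
    (hAM : (A ∩ M).Nonempty) : M ⊆ closure (orbitSetP f A) := by
  obtain ⟨-, hMcl, hinv, hdense⟩ := hM
  set K := closure (orbitSetP f (A ∩ M))
  have hKM : K ⊆ M := closure_minimal ((orbitSetP_subset_orbitSetZ f _).trans
    (orbitSetZ_subset_of_image_eq hinv inter_subset_right)) hMcl
  obtain ⟨a, ha⟩ := hAM
  have hKne : K.Nonempty := ⟨a, subset_closure (mem_iUnion.2 ⟨0, a, ha, by simp⟩)⟩
  obtain ⟨M', hM'K, ⟨z, hz⟩, hM'cl, hM'inv, -⟩ :=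
    exists_isMinimalSet_subset hKne isClosed_closure ((mapsTo_orbitSetP f _).closure f.continuous)
  calc M ⊆ closure (orbitZ f z) := hdense z (hKM (hM'K hz))
    _ ⊆ M' := closure_minimal (orbitZ_subset_of_image_eq hM'inv hz) hM'cl
    _ ⊆ K := hM'K
    _ ⊆ closure (orbitSetP f A) :=
      closure_mono (iUnion_mono fun _ => image_mono inter_subset_left)

theorem IsMinimalSet.subset_closure_orbitSetN {M A : Set X} (hM : IsMinimalSet f M)
    (hAM : (A ∩ M).Nonempty) : M ⊆ closure (orbitSetN f A) :=
  orbitSetP_symm (f := f) A ▸ hM.symm.subset_closure_orbitSetP hAM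

end Dynamics

section QuasiSection

variable {X : Type*} [TopologicalSpace X] {f : X ≃ₜ X} {A : Set X}

theorem IsQuasiSection.inter_nonempty (hA : IsQuasiSection f A) {M : Set X}
    (hM : IsMinimalSet f M) : (A ∩ M).Nonempty := by
  obtain ⟨⟨x, hx⟩, hMcl, hinv, -⟩ := hM
  by_contra hdisj
  have hAMc : A ⊆ Mᶜ := fun a ha haM => hdisj ⟨a, ha, haM⟩
  have hinvc : f '' Mᶜ = Mᶜ := by rw [image_compl_eq f.bijective, hinv]
  have hx' : x ∈ orbitSetZ f Mᶜ := hA.2 _ hMcl.isOpen_compl hAMc ▸ mem_univ x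
  exact orbitSetZ_subset_of_image_eq hinvc subset_rfl hx' hx

theorem IsQuasiSection.inter_minimalUnion [CompactSpace X] (hA : IsQuasiSection f A) :
    IsQuasiSection f (A ∩ minimalUnion f) := by
  refine ⟨hA.1.inter isClosed_closure, fun U hU hAU => eq_univ_of_forall fun y => ?_⟩
  obtain ⟨M, hMy, hM⟩ := exists_isMinimalSet_subset ⟨y, subset_closure (self_mem_orbitZ f y)⟩
    isClosed_closure ((mapsTo_orbitZ f y).closure f.continuous)
  obtain ⟨a, haA, haM⟩ := hA.inter_nonempty hM
  have haU : a ∈ U := hAU ⟨haA, subset_closure ⟨M, hM, haM⟩⟩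
  obtain ⟨_, hzU, n, rfl⟩ := mem_closure_iff.1 (hMy haM) U hU haU
  exact mem_orbitSetZ_of_zpow_mem hzU

theorem IsMinimalQuasiSection.subset_minimalUnion [CompactSpace X]
    (hA : IsMinimalQuasiSection f A) : A ⊆ minimalUnion f := by
  rw [← hA.2 _ hA.1.inter_minimalUnion inter_subset_left]
  exact inter_subset_right

end QuasiSection

theorem stmt5_general {X : Type*} [TopologicalSpace X] [CompactSpace X] (f : X ≃ₜ X)
    (A : Set X) (hA : IsMinimalQuasiSection f A) :
    closure (orbitSetZ f A) = minimalUnion f ∧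
    closure (orbitSetP f A) = minimalUnion f ∧
    closure (orbitSetN f A) = minimalUnion f := by
  have hZ : closure (orbitSetZ f A) ⊆ minimalUnion f :=
    closure_minimal (orbitSetZ_subset_of_image_eq image_minimalUnion hA.subset_minimalUnion)
      isClosed_closure
  have hP : minimalUnion f ⊆ closure (orbitSetP f A) := closure_minimal (sUnion_subset
    fun _ hM => hM.subset_closure_orbitSetP (hA.1.inter_nonempty hM)) isClosed_closure
  have hN : minimalUnion f ⊆ closure (orbitSetN f A) := closure_minimal (sUnion_subset
    fun _ hM => hM.subset_closure_orbitSetN (hA.1.inter_nonempty hM)) isClosed_closure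
  have hPZ := closure_mono (orbitSetP_subset_orbitSetZ f A)
  have hNZ := closure_mono (orbitSetN_subset_orbitSetZ f A)
  exact ⟨hZ.antisymm (hP.trans hPZ), (hPZ.trans hZ).antisymm hP, (hNZ.trans hZ).antisymm hN⟩

theorem stmt5 {X : Type*} [TopologicalSpace X] [CompactSpace X] [T2Space X] [Nonempty X] (f : X ≃ₜ X)
    (A : Set X) (hA : IsMinimalQuasiSection f A) :
    closure (orbitSetZ f A) = minimalUnion f ∧
    closure (orbitSetP f A) = minimalUnion f ∧
    closure (orbitSetN f A) = minimalUnion f :=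
  stmt5_general f A hA
end

section
/- Let X be a nonempty compact subset of ℝ and f : X → X a homeomorphism. Then the set inf_f := { inf O(x) : x ∈ X } is a basic set: it is a closed quasi-section and |O(x) ∩ inf_f| ≤ 1 for every x ∈ X. -/
open Set

/-!
Call `x` an orbit minimizer if `x ≤ fⁿ x` for all `n`. Each orbit closure is compact and
invariant, so its least element exists, is an orbit minimizer, and is the infimum of the orbit;
conversely an orbit minimizer is the infimum of its own orbit, so `inf_f` is exactly the set of
orbit minimizers. This set is closed, two minimizers on one orbit are below each other, and an open
set containing it contains a point of every orbit closure, hence meets every orbit.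
-/

section OrbitZ

variable {Y : Type*} [TopologicalSpace Y] (f : Y ≃ₜ Y)

def Homeomorph.toPermHom : (Y ≃ₜ Y) →* Equiv.Perm Y where
  toFun := Homeomorph.toEquiv
  map_one' := rfl
  map_mul' _ _ := rfl

theorem Homeomorph.continuous_toEquiv_zpow (n : ℤ) : Continuous (f.toEquiv ^ n) := by
  have h : f.toEquiv ^ n = (f ^ n).toEquiv := (map_zpow Homeomorph.toPermHom f n).symm
  rw [h]
  exact (f ^ n).continuous

theorem toEquiv_zpow_apply_zpow (n m : ℤ) (z : Y) :
    (f.toEquiv ^ n) ((f.toEquiv ^ m) z) = (f.toEquiv ^ (n + m)) z := by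
  rw [← Equiv.Perm.mul_apply, ← zpow_add]

theorem mem_orbitZ_self (x : Y) : x ∈ orbitZ f x := ⟨0, rfl⟩

theorem zpow_mem_orbitZ {x z : Y} (hz : z ∈ orbitZ f x) (n : ℤ) :
    (f.toEquiv ^ n) z ∈ orbitZ f x := by
  obtain ⟨m, rfl⟩ := hz
  exact ⟨n + m, (toEquiv_zpow_apply_zpow f n m x).symm⟩

theorem exists_zpow_eq_of_mem_orbitZ {x z w : Y} (hz : z ∈ orbitZ f x) (hw : w ∈ orbitZ f x) :
    ∃ n : ℤ, (f.toEquiv ^ n) z = w := by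
  obtain ⟨a, rfl⟩ := hz
  obtain ⟨b, rfl⟩ := hw
  exact ⟨b - a, by rw [toEquiv_zpow_apply_zpow, sub_add_cancel]⟩

theorem zpow_mem_closure_orbitZ {x z : Y} (hz : z ∈ closure (orbitZ f x)) (n : ℤ) :
    (f.toEquiv ^ n) z ∈ closure (orbitZ f x) :=
  MapsTo.closure (fun _ hw => zpow_mem_orbitZ f hw n) (f.continuous_toEquiv_zpow n) hz

theorem IsQuasiSection.of_closure_orbitZ_inter_nonempty {A : Set Y} (hA : IsClosed A)
    (h : ∀ p, (closure (orbitZ f p) ∩ A).Nonempty) : IsQuasiSection f A := by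
  refine ⟨hA, fun U hU hAU => eq_univ_iff_forall.mpr fun p => ?_⟩
  obtain ⟨m, hm, hmA⟩ := h p
  obtain ⟨z, hzU, n, rfl⟩ := mem_closure_iff.mp hm U hU (hAU hmA)
  refine mem_iUnion.mpr ⟨-n, _, hzU, ?_⟩
  rw [toEquiv_zpow_apply_zpow, neg_add_cancel, zpow_zero, Equiv.Perm.one_apply]

end OrbitZ

section OrbitMinimizers

variable {Y : Type*} [TopologicalSpace Y] [LinearOrder Y] (f : Y ≃ₜ Y)

def orbitMinimizers : Set Y := {x | ∀ n : ℤ, x ≤ (f.toEquiv ^ n) x}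

theorem isClosed_orbitMinimizers [OrderClosedTopology Y] : IsClosed (orbitMinimizers f) := by
  simp only [orbitMinimizers, ofPred_forall]
  exact isClosed_iInter fun n => isClosed_le continuous_id (f.continuous_toEquiv_zpow n)

theorem subsingleton_orbitZ_inter_orbitMinimizers (x : Y) :
    (orbitZ f x ∩ orbitMinimizers f).Subsingleton := by
  rintro z ⟨hz, hzmin⟩ w ⟨hw, hwmin⟩
  obtain ⟨n, rfl⟩ := exists_zpow_eq_of_mem_orbitZ f hz hw
  refine le_antisymm (hzmin n) ?_
  simpa [toEquiv_zpow_apply_zpow] using hwmin (-n)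

theorem mem_orbitMinimizers_of_isLeast_closure_orbitZ {x m : Y}
    (hm : IsLeast (closure (orbitZ f x)) m) : m ∈ orbitMinimizers f :=
  fun n => hm.2 (zpow_mem_closure_orbitZ f hm.1 n)

theorem exists_isLeast_closure_orbitZ [CompactSpace Y] [ClosedIicTopology Y] (x : Y) :
    ∃ m, IsLeast (closure (orbitZ f x)) m :=
  isClosed_closure.isCompact.exists_isLeast ⟨x, subset_closure (mem_orbitZ_self f x)⟩

theorem isBasicSet_orbitMinimizers [CompactSpace Y] [OrderClosedTopology Y] :
    IsBasicSet f (orbitMinimizers f) := by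
  refine ⟨.of_closure_orbitZ_inter_nonempty f (isClosed_orbitMinimizers f) fun p => ?_,
    subsingleton_orbitZ_inter_orbitMinimizers f⟩
  obtain ⟨m, hm⟩ := exists_isLeast_closure_orbitZ f p
  exact ⟨m, hm.1, mem_orbitMinimizers_of_isLeast_closure_orbitZ f hm⟩

end OrbitMinimizers

theorem setOf_eq_csInf_orbitZ_eq_orbitMinimizers {α : Type*} [ConditionallyCompleteLinearOrder α]
    [TopologicalSpace α] [OrderTopology α] (X : Set α) [CompactSpace X] (f : X ≃ₜ X) :
    {x : X | ∃ y : X, (x : α) = sInf ((↑) '' orbitZ f y)} = orbitMinimizers f := by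
  ext x
  refine ⟨?_, fun hx => ⟨x, ?_⟩⟩
  · rintro ⟨y, hxy⟩
    obtain ⟨m, hm⟩ := exists_isLeast_closure_orbitZ f y
    have hglb : IsGLB ((↑) '' orbitZ f y) (m : α) :=
      isGLB_of_mem_closure
        (by rintro _ ⟨z, hz, rfl⟩; exact hm.2 (subset_closure hz))
        (image_closure_subset_closure_image continuous_subtype_val ⟨m, hm.1, rfl⟩)
    have hxm : x = m := Subtype.ext (hxy.trans (hglb.csInf_eq ⟨y, y, mem_orbitZ_self f y, rfl⟩))
    exact hxm ▸ mem_orbitMinimizers_of_isLeast_closure_orbitZ f hm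
  · have hleast : IsLeast ((↑) '' orbitZ f x) (x : α) := by
      refine ⟨⟨x, mem_orbitZ_self f x, rfl⟩, ?_⟩
      rintro _ ⟨z, ⟨n, rfl⟩, rfl⟩
      exact hx n
    exact hleast.csInf_eq.symm

theorem stmt16_general (X : Set ℝ) (hX : IsCompact X)
    (f : X ≃ₜ X) :
    IsBasicSet f {x : X | ∃ y : X, (x : ℝ) = sInf ((↑) '' orbitZ f y)} := by
  have := isCompact_iff_compactSpace.mp hX
  rw [setOf_eq_csInf_orbitZ_eq_orbitMinimizers]
  exact isBasicSet_orbitMinimizers f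

theorem stmt16 (X : Set ℝ) (hne : X.Nonempty) (hX : IsCompact X)
    (f : X ≃ₜ X) :
    IsBasicSet f {x : X | ∃ y : X, (x : ℝ) = sInf ((↑) '' orbitZ f y)} :=
  stmt16_general X hX f
end
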